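/- For the unanimity game u_T with distinct players i, j both in T, the m-order interaction is I^{(m)}(i,j) = C(n-|T|, m-|T|+2) / C(n-2, m) for m ≥ |T| - 2, and 0 for m < |T| - 2. In particular, I^{(m)}(i,j) ≥ 0 and is nondecreasing in m. -/

import Mathlib

open Finset

/-- `Δv(S,i,j) = v(S∪{i,j}) - v(S∪{i}) - v(S∪{j}) + v(S)`. -/
def deltaV {α : Type*} [DecidableEq α] (v : Finset α → ℝ) (S : Finset α) (i j : α) : ℝ :=
  v (insert i (insert j S)) - v (insert i S) - v (insert j S) + v S

/-- The `m`-order interaction `I^{(m)}(i,j)` for the game `(N, v)`. -/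
noncomputable def interOrder {α : Type*} [DecidableEq α] (N : Finset α) (v : Finset α → ℝ)
    (i j : α) (m : ℕ) : ℝ :=
  (1 / ((N.card - 2).choose m : ℝ)) *
    ∑ S ∈ ((N.erase i).erase j).powersetCard m, deltaV v S i j

/-- Counting supersets of `B` of size `m` inside `A`. -/
lemma card_filter_superset {α : Type*} [DecidableEq α] (A B : Finset α) (hBA : B ⊆ A) (m : ℕ)
    (hm : B.card ≤ m) :
    ((A.powersetCard m).filter (fun S => B ⊆ S)).card
      = (A.card - B.card).choose (m - B.card) := by
  rw [← Finset.card_sdiff_of_subset hBA, ← Finset.card_powersetCard]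
  apply Finset.card_bij' (fun S _ => S \ B) (fun U _ => U ∪ B)
  · intro S hS
    simp only [mem_filter, mem_powersetCard] at hS
    simp only [mem_powersetCard]
    exact ⟨Finset.sdiff_subset_sdiff hS.1.1 le_rfl,
      by rw [Finset.card_sdiff_of_subset hS.2, hS.1.2]⟩
  · intro U hU
    simp only [mem_powersetCard] at hU
    have hUB : Disjoint U B := Finset.disjoint_of_subset_left hU.1 Finset.sdiff_disjoint
    simp only [mem_filter, mem_powersetCard]
    refine ⟨⟨Finset.union_subset (hU.1.trans (Finset.sdiff_subset)) hBA, ?_⟩,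
      Finset.subset_union_right⟩
    rw [Finset.card_union_of_disjoint hUB, hU.2]
    omega
  · intro S hS
    simp only [mem_filter, mem_powersetCard] at hS
    exact Finset.sdiff_union_of_subset hS.2
  · intro U hU
    simp only [mem_powersetCard] at hU
    have hUB : Disjoint U B := Finset.disjoint_of_subset_left hU.1 Finset.sdiff_disjoint
    rw [Finset.union_sdiff_cancel_right hUB]

/-- For the unanimity game `u_T` with distinct `i, j ∈ T`:
`I^{(m)}(i,j) = C(n-|T|, m-|T|+2) / C(n-2, m)` for `m ≥ |T| - 2`, and `0` for
`m < |T| - 2`; moreover `I^{(m)}(i,j) ≥ 0` and is nondecreasing in `m`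
(over the valid range `m ≤ n - 2`). -/
theorem interOrder_unanimity {α : Type*} [DecidableEq α] (N T : Finset α)
    (hTN : T ⊆ N) (hT : 2 ≤ T.card) (i j : α) (hi : i ∈ T) (hj : j ∈ T) (hij : i ≠ j) :
    (∀ m, T.card - 2 ≤ m →
        interOrder N (fun S => if T ⊆ S then (1 : ℝ) else 0) i j m
          = ((N.card - T.card).choose (m + 2 - T.card) : ℝ) / ((N.card - 2).choose m : ℝ)) ∧
      (∀ m, m < T.card - 2 →
        interOrder N (fun S => if T ⊆ S then (1 : ℝ) else 0) i j m = 0) ∧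
      (∀ m, 0 ≤ interOrder N (fun S => if T ⊆ S then (1 : ℝ) else 0) i j m) ∧
      (∀ m m', m ≤ m' → m' ≤ N.card - 2 →
        interOrder N (fun S => if T ⊆ S then (1 : ℝ) else 0) i j m
          ≤ interOrder N (fun S => if T ⊆ S then (1 : ℝ) else 0) i j m') := by
  set N' : Finset α := (N.erase i).erase j with hN'
  set T' : Finset α := (T.erase i).erase j with hT'
  have hiN : i ∈ N := hTN hi
  have hjN : j ∈ N := hTN hj
  have hjN' : j ∈ N.erase i := Finset.mem_erase.2 ⟨hij.symm, hjN⟩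
  have hcardN' : N'.card = N.card - 2 := by
    rw [hN', Finset.card_erase_of_mem hjN', Finset.card_erase_of_mem hiN]
    omega
  have hjT' : j ∈ T.erase i := Finset.mem_erase.2 ⟨hij.symm, hj⟩
  have hcardT' : T'.card = T.card - 2 := by
    rw [hT', Finset.card_erase_of_mem hjT', Finset.card_erase_of_mem hi]
    omega
  have hT'N' : T' ⊆ N' := by
    intro x hx
    simp only [hT', hN', Finset.mem_erase] at hx ⊢
    exact ⟨hx.1, hx.2.1, hTN hx.2.2⟩
  have key : ∀ S : Finset α, S ⊆ N' →
      deltaV (fun S => if T ⊆ S then (1 : ℝ) else 0) S i j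
        = if T' ⊆ S then 1 else 0 := by
    intro S hS
    have hiS : i ∉ S := fun h => (Finset.mem_erase.1 (Finset.mem_erase.1 (hS h)).2).1 rfl
    have hjS : j ∉ S := fun h => (Finset.mem_erase.1 (hS h)).1 rfl
    have h1 : ¬ T ⊆ insert i S := fun h => by
      rcases Finset.mem_insert.1 (h hj) with h' | h'
      · exact hij.symm h'
      · exact hjS h'
    have h2 : ¬ T ⊆ insert j S := fun h => by
      rcases Finset.mem_insert.1 (h hi) with h' | h'
      · exact hij h'
      · exact hiS h'
    have h3 : ¬ T ⊆ S := fun h => hiS (h hi)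
    have h4 : T ⊆ insert i (insert j S) ↔ T' ⊆ S := by
      constructor
      · intro h x hx
        have hx' := Finset.mem_erase.1 hx
        have hx'' := Finset.mem_erase.1 hx'.2
        rcases Finset.mem_insert.1 (h hx''.2) with h' | h'
        · exact absurd h' hx''.1
        · rcases Finset.mem_insert.1 h' with h'' | h''
          · exact absurd h'' hx'.1
          · exact h''
      · intro h x hx
        by_cases hxi : x = i
        · simp [hxi]
        by_cases hxj : x = j
        · simp [hxj]
        · exact Finset.mem_insert.2 (Or.inr (Finset.mem_insert.2 (Or.inr
            (h (Finset.mem_erase.2 ⟨hxj, Finset.mem_erase.2 ⟨hxi, hx⟩⟩)))))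
    simp only [deltaV, if_neg h1, if_neg h2, if_neg h3]
    by_cases h : T' ⊆ S
    · rw [if_pos (h4.2 h), if_pos h]; ring
    · rw [if_neg (fun h' => h (h4.1 h')), if_neg h]; ring
  -- the sum
  have hsum : ∀ m : ℕ, (∑ S ∈ N'.powersetCard m,
      deltaV (fun S => if T ⊆ S then (1 : ℝ) else 0) S i j)
      = (((N'.powersetCard m).filter (fun S => T' ⊆ S)).card : ℝ) := by
    intro m
    rw [Finset.sum_congr rfl (fun S hS => key S (Finset.mem_powersetCard.1 hS).1)]
    rw [Finset.sum_boole]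
  have hcount : ∀ m : ℕ, T.card - 2 ≤ m →
      (((N'.powersetCard m).filter (fun S => T' ⊆ S)).card : ℕ)
        = (N.card - T.card).choose (m + 2 - T.card) := by
    intro m hm
    rw [card_filter_superset N' T' hT'N' m (by omega)]
    have hTle : T.card ≤ N.card := Finset.card_le_card hTN
    rw [hcardN', hcardT']
    congr 1 <;> omega
  have hzero : ∀ m : ℕ, m < T.card - 2 →
      ((N'.powersetCard m).filter (fun S => T' ⊆ S)) = ∅ := by
    intro m hm
    rw [Finset.filter_eq_empty_iff]
    intro S hS hTS
    have := Finset.card_le_card hTS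
    rw [(Finset.mem_powersetCard.1 hS).2, hcardT'] at this
    omega
  have main : ∀ m, T.card - 2 ≤ m →
      interOrder N (fun S => if T ⊆ S then (1 : ℝ) else 0) i j m
        = ((N.card - T.card).choose (m + 2 - T.card) : ℝ) / ((N.card - 2).choose m : ℝ) := by
    intro m hm
    rw [interOrder, hsum m, hcount m hm, one_div, div_eq_inv_mul]
  have zero : ∀ m, m < T.card - 2 →
      interOrder N (fun S => if T ⊆ S then (1 : ℝ) else 0) i j m = 0 := by
    intro m hm
    rw [interOrder, hsum m, hzero m hm]
    simp
  refine ⟨main, zero, ?_, ?_⟩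
  · intro m
    rw [interOrder, hsum m]
    positivity
  · intro m m' hmm' hm'
    have hTle : T.card ≤ N.card := Finset.card_le_card hTN
    -- the closed-form value: choose identity rewriting
    have val : ∀ k, T.card - 2 ≤ k → k ≤ N.card - 2 →
        interOrder N (fun S => if T ⊆ S then (1 : ℝ) else 0) i j k
          = (k.choose (T.card - 2) : ℝ) / ((N.card - 2).choose (T.card - 2) : ℝ) := by
      intro k hk1 hk2
      rw [main k hk1]
      have hid := Nat.choose_mul (n := N.card - 2) (k := k) (s := T.card - 2) hk1
      have h1 : N.card - 2 - (T.card - 2) = N.card - T.card := by omega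
      have h2 : k - (T.card - 2) = k + 2 - T.card := by omega
      rw [h1, h2] at hid
      have hne : ((N.card - 2).choose k : ℝ) ≠ 0 := by
        exact_mod_cast (Nat.choose_pos hk2).ne'
      have hne2 : ((N.card - 2).choose (T.card - 2) : ℝ) ≠ 0 := by
        exact_mod_cast (Nat.choose_pos (show T.card - 2 ≤ N.card - 2 by omega)).ne'
      rw [div_eq_div_iff hne hne2]
      have := congrArg (fun x : ℕ => (x : ℝ)) hid
      push_cast at this ⊢
      linarith [this]
    by_cases h1 : m' < T.card - 2
    · rw [zero m (by omega), zero m' h1]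
    push_neg at h1
    by_cases h2 : m < T.card - 2
    · rw [zero m h2, main m' h1]
      positivity
    push_neg at h2
    rw [val m h2 (le_trans hmm' hm'), val m' h1 hm']
    have hc : (0:ℝ) < ((N.card - 2).choose (T.card - 2) : ℝ) := by
      exact_mod_cast Nat.choose_pos (show T.card - 2 ≤ N.card - 2 by omega)
    have hle : (m.choose (T.card - 2) : ℝ) ≤ (m'.choose (T.card - 2) : ℝ) := by
      exact_mod_cast Nat.choose_le_choose _ hmm'
    gcongr
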